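/- If both players play optimally, the number of moves in the domination game differs by at most one depending on who starts: for every finite graph G, |γ_g(G) − γ_g′(G)| ≤ 1. -/

import Mathlib

/-!
By the Continuation Principle, the value of the game is antitone in the set of vertices
already declared dominated: on the larger set, Dominator imitates an optimal strategy for the
smaller one, replacing a move that has become illegal by an arbitrary legal move. So if Staller
opens with `x`, the remaining D-game on `S ∪ N[x]` lasts no longer than the D-game on `S`,
which gives `γ_g' ≤ γ_g + 1`. Conversely, Dominator may open with Staller's optimal first
move `x`, and then `γ_g ≤ 1 + γ_g'(S ∪ N[x]) ≤ 2 + γ_g(S ∪ N[x]) = 1 + γ_g'`.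
-/

open Finset

namespace DomGame

open scoped Classical

noncomputable section

variable {V : Type*}

/-- The closed neighborhood of `x` in `G`, as a `Finset`. -/
def closedNbr (G : SimpleGraph V) [Fintype V] (x : V) : Finset V :=
  Finset.univ.filter (fun y => y = x ∨ G.Adj x y)

lemma card_compl_lt (G : SimpleGraph V) [Fintype V] {S : Finset V} {x : V}
    (h : ¬ closedNbr G x ⊆ S) :
    (Finset.univ \ (S ∪ closedNbr G x)).card < (Finset.univ \ S).card := by
  obtain ⟨v, hvN, hvS⟩ := Finset.not_subset.mp h
  apply Finset.card_lt_card
  have hsub : Finset.univ \ (S ∪ closedNbr G x) ⊆ Finset.univ \ S := by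
    intro y hy
    simp only [Finset.mem_sdiff, Finset.mem_univ, Finset.mem_union, true_and, not_or] at hy ⊢
    exact hy.1
  exact (Finset.ssubset_iff_of_subset hsub).mpr ⟨v, by simp [hvS], by simp [hvN]⟩

/-- The value of the (partially dominated) domination game on `G|S`, with
`dom = true` meaning Dominator moves next, `dom = false` meaning Staller moves next.
A legal move is a vertex whose closed neighborhood contains a yet undominated vertex;
Dominator minimizes, Staller maximizes the total number of moves. -/
def gameVal (G : SimpleGraph V) [Fintype V] (dom : Bool) (S : Finset V) : ℕ :=
  let moves := Finset.univ.filter (fun x => ¬ closedNbr G x ⊆ S)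
  if h : moves.Nonempty then
    if dom then
      moves.attach.inf' (by simpa using h)
        (fun x => 1 + gameVal G false (S ∪ closedNbr G x.1))
    else
      moves.attach.sup' (by simpa using h)
        (fun x => 1 + gameVal G true (S ∪ closedNbr G x.1))
  else 0
termination_by (Finset.univ \ S).card
decreasing_by
  · exact card_compl_lt G (by simpa using (Finset.mem_filter.mp x.2).2)
  · exact card_compl_lt G (by simpa using (Finset.mem_filter.mp x.2).2)

/-- The D-game domination number `γ_g(G)`. -/
def gammaD (G : SimpleGraph V) [Fintype V] : ℕ := gameVal G true ∅

/-- The S-game domination number `γ_g'(G)`. -/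
def gammaS (G : SimpleGraph V) [Fintype V] : ℕ := gameVal G false ∅

/-- Value of the Staller-pass domination game on `G|S`: Staller may skip
(at most) one move during the game; the skipped turn is not counted.
`dom` tells whose turn it is, `canPass` whether Staller's pass is still available. -/
def spVal (G : SimpleGraph V) [Fintype V] (dom : Bool) (canPass : Bool) (S : Finset V) : ℕ :=
  let moves := Finset.univ.filter (fun x => ¬ closedNbr G x ⊆ S)
  if h : moves.Nonempty then
    if dom then
      moves.attach.inf' (by simpa using h)
        (fun x => 1 + spVal G false canPass (S ∪ closedNbr G x.1))
    else
      if hc : canPass then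
        max (moves.attach.sup' (by simpa using h)
              (fun x => 1 + spVal G true canPass (S ∪ closedNbr G x.1)))
            (spVal G true false S)
      else
        moves.attach.sup' (by simpa using h)
          (fun x => 1 + spVal G true canPass (S ∪ closedNbr G x.1))
  else 0
termination_by ((Finset.univ \ S).card, if canPass then 1 else 0)
decreasing_by
  · exact Prod.Lex.left _ _ (card_compl_lt G (by simpa using (Finset.mem_filter.mp x.2).2))
  · exact Prod.Lex.left _ _ (card_compl_lt G (by simpa using (Finset.mem_filter.mp x.2).2))
  · simp only [hc, if_true]
    exact Prod.Lex.right _ (by norm_num)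
  · exact Prod.Lex.left _ _ (card_compl_lt G (by simpa using (Finset.mem_filter.mp x.2).2))

/-- Value of the Dominator-pass domination game on `G|S`: Dominator may skip
(at most) one move during the game; the skipped turn is not counted. -/
def dpVal (G : SimpleGraph V) [Fintype V] (dom : Bool) (canPass : Bool) (S : Finset V) : ℕ :=
  let moves := Finset.univ.filter (fun x => ¬ closedNbr G x ⊆ S)
  if h : moves.Nonempty then
    if dom then
      if hc : canPass then
        min (moves.attach.inf' (by simpa using h)
              (fun x => 1 + dpVal G false canPass (S ∪ closedNbr G x.1)))
            (dpVal G false false S)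
      else
        moves.attach.inf' (by simpa using h)
          (fun x => 1 + dpVal G false canPass (S ∪ closedNbr G x.1))
    else
      moves.attach.sup' (by simpa using h)
        (fun x => 1 + dpVal G true canPass (S ∪ closedNbr G x.1))
  else 0
termination_by ((Finset.univ \ S).card, if canPass then 1 else 0)
decreasing_by
  · exact Prod.Lex.left _ _ (card_compl_lt G (by simpa using (Finset.mem_filter.mp x.2).2))
  · simp only [hc, if_true]
    exact Prod.Lex.right _ (by norm_num)
  · exact Prod.Lex.left _ _ (card_compl_lt G (by simpa using (Finset.mem_filter.mp x.2).2))
  · exact Prod.Lex.left _ _ (card_compl_lt G (by simpa using (Finset.mem_filter.mp x.2).2))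

/-- The graph `G_{uv}`: obtained from `G - uv` by adding two new vertices
`u' = Sum.inr false` and `v' = Sum.inr true` together with the edges `u v'` and `v u'`. -/
def cutGraph (G : SimpleGraph V) (u v : V) : SimpleGraph (V ⊕ Bool) :=
  SimpleGraph.fromRel (fun x y =>
    match x, y with
    | Sum.inl a, Sum.inl b => G.Adj a b ∧ ¬ (a = u ∧ b = v) ∧ ¬ (a = v ∧ b = u)
    | Sum.inl a, Sum.inr b => (b = false ∧ a = v) ∨ (b = true ∧ a = u)
    | _, _ => False)

/-- The set of vertices of `G_{uv}` declared dominated, given that `B ⊆ V(G)` is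
declared dominated: `B` together with the two new vertices `u'` and `v'`. -/
def cutDom [DecidableEq V] (B : Finset V) : Finset (V ⊕ Bool) :=
  B.image Sum.inl ∪ {Sum.inr false, Sum.inr true}

/-- Disjoint union of two simple graphs. -/
def disjUnion {α β : Type*} (G : SimpleGraph α) (H : SimpleGraph β) :
    SimpleGraph (α ⊕ β) :=
  SimpleGraph.fromRel (fun x y =>
    match x, y with
    | Sum.inl a, Sum.inl b => G.Adj a b
    | Sum.inr a, Sum.inr b => H.Adj a b
    | _, _ => False)

/-- The disjoint union of `k` paths, the `i`-th on `size i` vertices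
(consecutive vertices of each `Fin (size i)` being adjacent). -/
def sigmaPathGraph (k : ℕ) (size : Fin k → ℕ) :
    SimpleGraph (Σ i : Fin k, Fin (size i)) :=
  SimpleGraph.fromRel (fun x y => x.1 = y.1 ∧ x.2.val + 1 = y.2.val)

/-- Vertex set of the three-legged spider `T_{p,q,r}`:
the center together with three legs on `4p`, `4q` and `4r` vertices. -/
abbrev SpiderV (p q r : ℕ) := Unit ⊕ (Fin (4*p) ⊕ (Fin (4*q) ⊕ Fin (4*r)))

/-- The three-legged spider `T_{p,q,r}`, obtained from paths `P_{4p+1}`, `P_{4q+1}`,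
`P_{4r+1}` by identifying one end-vertex of each into the center. In each leg,
vertex `0` is adjacent to the center, and vertices `i`, `i+1` are adjacent. -/
def spider (p q r : ℕ) : SimpleGraph (SpiderV p q r) :=
  SimpleGraph.fromRel (fun x y =>
    match x, y with
    | Sum.inl _, Sum.inr (Sum.inl i) => i.val = 0
    | Sum.inl _, Sum.inr (Sum.inr (Sum.inl i)) => i.val = 0
    | Sum.inl _, Sum.inr (Sum.inr (Sum.inr i)) => i.val = 0
    | Sum.inr (Sum.inl i), Sum.inr (Sum.inl j) => i.val + 1 = j.val
    | Sum.inr (Sum.inr (Sum.inl i)), Sum.inr (Sum.inr (Sum.inl j)) => i.val + 1 = j.val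
    | Sum.inr (Sum.inr (Sum.inr i)), Sum.inr (Sum.inr (Sum.inr j)) => i.val + 1 = j.val
    | _, _ => False)

/-- The weight `w(P'_{4q+r}) = w(P''_{4q+r}) = 2q + c_r` with
`c_0 = 0`, `c_1 = 1`, `c_2 = 3/2`, `c_3 = 7/4`, as a function of `n = 4q + r`. -/
def pathWeight (n : ℕ) : ℚ :=
  2 * (n / 4 : ℕ) +
    (if n % 4 = 0 then 0 else if n % 4 = 1 then 1 else if n % 4 = 2 then 3/2 else 7/4)

section GameValue

variable [Fintype V] (G : SimpleGraph V)

lemma gameVal_eq_zero {S : Finset V} (hS : ∀ x, closedNbr G x ⊆ S) (d : Bool) :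
    gameVal G d S = 0 := by
  rw [gameVal, dif_neg]
  simpa [Finset.Nonempty] using hS

lemma gameVal_true_le {S : Finset V} {x : V} (hx : ¬ closedNbr G x ⊆ S) :
    gameVal G true S ≤ 1 + gameVal G false (S ∪ closedNbr G x) := by
  have hmem : x ∈ univ.filter (fun y => ¬ closedNbr G y ⊆ S) := by simp [hx]
  rw [gameVal, dif_pos ⟨x, hmem⟩, if_pos rfl]
  exact inf'_le _ (mem_attach _ ⟨x, hmem⟩)

lemma le_gameVal_false {S : Finset V} {x : V} (hx : ¬ closedNbr G x ⊆ S) :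
    1 + gameVal G true (S ∪ closedNbr G x) ≤ gameVal G false S := by
  have hmem : x ∈ univ.filter (fun y => ¬ closedNbr G y ⊆ S) := by simp [hx]
  rw [gameVal.eq_1 G false S, dif_pos ⟨x, hmem⟩, if_neg Bool.false_ne_true]
  exact le_sup' (fun y : { y // y ∈ _ } => 1 + gameVal G true (S ∪ closedNbr G y.1))
    (mem_attach _ ⟨x, hmem⟩)

lemma exists_gameVal_eq (d : Bool) {S : Finset V} (hS : ∃ x, ¬ closedNbr G x ⊆ S) :
    ∃ x, ¬ closedNbr G x ⊆ S ∧ gameVal G d S = 1 + gameVal G (!d) (S ∪ closedNbr G x) := by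
  have hne : (univ.filter (fun x => ¬ closedNbr G x ⊆ S)).attach.Nonempty := by
    simpa [Finset.Nonempty] using hS
  rw [gameVal, dif_pos (by simpa using hne)]
  cases d with
  | true =>
    obtain ⟨x, -, hval⟩ := exists_mem_eq_inf' hne
      (fun x => 1 + gameVal G false (S ∪ closedNbr G x.1))
    exact ⟨x.1, (mem_filter.mp x.2).2, hval⟩
  | false =>
    obtain ⟨x, -, hval⟩ := exists_mem_eq_sup' hne
      (fun x => 1 + gameVal G true (S ∪ closedNbr G x.1))
    exact ⟨x.1, (mem_filter.mp x.2).2, hval⟩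

lemma exists_legal_union_subset_union {S T : Finset V} (hST : S ⊆ T)
    (hT : ∃ y, ¬ closedNbr G y ⊆ T) (x : V) :
    ∃ y, ¬ closedNbr G y ⊆ T ∧ S ∪ closedNbr G x ⊆ T ∪ closedNbr G y := by
  by_cases hxT : closedNbr G x ⊆ T
  · obtain ⟨y, hyT⟩ := hT
    exact ⟨y, hyT, union_subset (hST.trans subset_union_left) (hxT.trans subset_union_left)⟩
  · exact ⟨x, hxT, union_subset_union_left hST⟩

lemma gameVal_le_of_subset (d : Bool) {S T : Finset V} (hST : S ⊆ T) :
    gameVal G d T ≤ gameVal G d S := by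
  by_cases hT : ∀ y, closedNbr G y ⊆ T
  · rw [gameVal_eq_zero G hT]
    exact Nat.zero_le _
  rw [not_forall] at hT
  cases d with
  | false =>
    obtain ⟨y, hyT, hval⟩ := exists_gameVal_eq G false hT
    have hyS : ¬ closedNbr G y ⊆ S := fun h => hyT (h.trans hST)
    have hcont := gameVal_le_of_subset true
      (union_subset_union_left hST : S ∪ closedNbr G y ⊆ T ∪ closedNbr G y)
    have hy := le_gameVal_false G hyS
    rw [hval, Bool.not_false]
    omega
  | true =>
    have hS : ∃ x, ¬ closedNbr G x ⊆ S := hT.imp fun y hyT h => hyT (h.trans hST)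
    obtain ⟨x, hxS, hval⟩ := exists_gameVal_eq G true hS
    obtain ⟨y, hyT, hsub⟩ := exists_legal_union_subset_union G hST hT x
    have hcont := gameVal_le_of_subset false hsub
    have hy := gameVal_true_le G hyT
    rw [hval, Bool.not_true]
    omega
termination_by (univ \ S).card
decreasing_by
  · exact card_compl_lt G hyS
  · exact card_compl_lt G hxS

lemma gameVal_false_le_true_add_one (S : Finset V) :
    gameVal G false S ≤ gameVal G true S + 1 := by
  by_cases hS : ∀ x, closedNbr G x ⊆ S
  · simp [gameVal_eq_zero G hS]
  · obtain ⟨x, -, hval⟩ := exists_gameVal_eq G false (not_forall.mp hS)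
    have hcont := gameVal_le_of_subset G true (subset_union_left : S ⊆ S ∪ closedNbr G x)
    rw [hval, Bool.not_false]
    omega

lemma gameVal_true_le_false_add_one (S : Finset V) :
    gameVal G true S ≤ gameVal G false S + 1 := by
  by_cases hS : ∀ x, closedNbr G x ⊆ S
  · simp [gameVal_eq_zero G hS]
  · obtain ⟨x, hx, hval⟩ := exists_gameVal_eq G false (not_forall.mp hS)
    have hopen := gameVal_true_le G hx
    have hrest := gameVal_false_le_true_add_one G (S ∪ closedNbr G x)
    rw [hval, Bool.not_false]
    omega

end GameValue

/-- For every finite graph `G`, `|γ_g(G) − γ_g′(G)| ≤ 1`. -/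
theorem game_numbers_differ_by_at_most_one {V : Type*} [Fintype V] (G : SimpleGraph V) :
    |(gammaD G : ℤ) - (gammaS G : ℤ)| ≤ 1 := by
  have h₁ := gameVal_false_le_true_add_one G ∅
  have h₂ := gameVal_true_le_false_add_one G ∅
  rw [gammaD, gammaS, abs_le]
  omega

end

end DomGame
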